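/- For every ξ = (ξ₁,ξ₂) ∈ ℝ²∖{0}, the 3×3 complex matrix k₀(ξ) := (i·𝕜/|ξ|)·[[0,0,−ξ₁],[0,0,−ξ₂],[ξ₁,ξ₂,0]] is Hermitian, satisfies k₀(ξ)³ = 𝕜²·k₀(ξ), and its set of eigenvalues is exactly {0, 𝕜, −𝕜}. (The principal symbol of the elastic Neumann–Poincaré operator has eigenvalues 0, ±𝕜 independent of the point and covector; in particular the NP operator is polynomially compact with polynomial p(ω) = ω(ω² − 𝕜²).) -/

import Mathlib

/-!
The symbol is `c • N` with `N = [[0,0,-a],[0,0,-b],[a,b,0]]` and `c = i𝕜/|ξ|`. Since `N` is real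
skew-symmetric and `c` purely imaginary, `c • N` is Hermitian. A direct computation gives
`N³ = -(a² + b²) N` and `det (x - c • N) = x (x² + c² (a² + b²))`, and `c² (a² + b²) = -𝕜²`
because `|ξ|² = a² + b²`; hence `(c • N)³ = 𝕜² (c • N)` and the eigenvalues are `0, ±𝕜`.
-/

/-- The principal symbol `k₀(ξ)` of the elastic Neumann–Poincaré operator. -/
noncomputable def npPrincipalSymbol (lam mu : ℝ) (ξ : Fin 2 → ℝ) :
    Matrix (Fin 3) (Fin 3) ℂ :=
  ((Complex.I * ((mu / (2 * (lam + 2 * mu)) : ℝ) : ℂ)) /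
      ((Real.sqrt (ξ 0 ^ 2 + ξ 1 ^ 2) : ℝ) : ℂ)) •
    !![0, 0, -((ξ 0 : ℝ) : ℂ);
       0, 0, -((ξ 1 : ℝ) : ℂ);
       ((ξ 0 : ℝ) : ℂ), ((ξ 1 : ℝ) : ℂ), 0]
open Matrix

section CommRing

variable {R : Type*} [CommRing R]

def npBlock (a b : R) : Matrix (Fin 3) (Fin 3) R :=
  !![0, 0, -a; 0, 0, -b; a, b, 0]

theorem npBlock_pow_three (a b : R) : npBlock a b ^ 3 = (-(a ^ 2 + b ^ 2)) • npBlock a b := by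
  rw [pow_succ, pow_two]
  simp only [npBlock, mul_fin_three, smul_of, smul_cons, smul_eq_mul, smul_empty]
  congr 1
  ring_nf

theorem smul_npBlock_pow_three (t a b : R) :
    (t • npBlock a b) ^ 3 = (-(t ^ 2 * (a ^ 2 + b ^ 2))) • t • npBlock a b := by
  rw [smul_pow, npBlock_pow_three, smul_smul, smul_smul]
  congr 1
  ring

theorem eval_charpoly_smul_npBlock (t a b x : R) :
    (t • npBlock a b).charpoly.eval x = x * (x ^ 2 + t ^ 2 * (a ^ 2 + b ^ 2)) := by
  rw [eval_charpoly, det_fin_three]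
  simp only [npBlock, smul_of, smul_cons, smul_eq_mul, smul_empty, scalar_apply, Matrix.sub_apply,
    diagonal_apply_eq, diagonal_apply_ne, of_apply, cons_val', cons_val_zero, cons_val_one, cons_val,
    cons_val_fin_one, ne_eq, Fin.reduceEq, not_false_eq_true]
  ring

end CommRing

theorem conjTranspose_npBlock_ofReal (a b : ℝ) :
    (npBlock (a : ℂ) b)ᴴ = -npBlock (a : ℂ) b := by
  ext i j
  fin_cases i <;> fin_cases j <;> simp [npBlock]

theorem isHermitian_smul_npBlock_ofReal {c : ℂ} (hc : star c = -c) (a b : ℝ) :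
    (c • npBlock (a : ℂ) b).IsHermitian := by
  rw [IsHermitian, conjTranspose_smul, conjTranspose_npBlock_ofReal, hc, neg_smul_neg]

theorem spectrum_eq_of_eval_charpoly {n K : Type*} [Fintype n] [DecidableEq n] [Field K]
    {A : Matrix n n K} {k : K} (hA : ∀ x, A.charpoly.eval x = x * (x - k) * (x + k)) :
    spectrum K A = {0, k, -k} := by
  ext x
  simp only [mem_spectrum_iff_isRoot_charpoly, Polynomial.IsRoot, hA, mul_eq_zero, sub_eq_zero,
    add_eq_zero_iff_eq_neg, Set.mem_insert_iff, Set.mem_singleton_iff, or_assoc]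

theorem sq_add_sq_ne_zero_of_ne_zero {ξ : Fin 2 → ℝ} (hξ : ξ ≠ 0) : ξ 0 ^ 2 + ξ 1 ^ 2 ≠ 0 := by
  contrapose! hξ
  obtain ⟨h0, h1⟩ := (add_eq_zero_iff_of_nonneg (sq_nonneg _) (sq_nonneg _)).1 hξ
  ext i
  fin_cases i
  exacts [pow_eq_zero_iff two_ne_zero |>.1 h0, pow_eq_zero_iff two_ne_zero |>.1 h1]

theorem I_mul_div_sqrt_sq_mul {k a b : ℝ} (hab : a ^ 2 + b ^ 2 ≠ 0) :
    (Complex.I * k / (√(a ^ 2 + b ^ 2) : ℝ)) ^ 2 * ((a : ℂ) ^ 2 + (b : ℂ) ^ 2) = -(k : ℂ) ^ 2 := by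
  have hr : ((√(a ^ 2 + b ^ 2) : ℝ) : ℂ) ^ 2 = (a : ℂ) ^ 2 + (b : ℂ) ^ 2 := by
    exact_mod_cast Real.sq_sqrt (by positivity)
  have hr0 : ((√(a ^ 2 + b ^ 2) : ℝ) : ℂ) ≠ 0 := by
    exact_mod_cast (Real.sqrt_pos.2 (lt_of_le_of_ne (by positivity) hab.symm)).ne'
  rw [div_pow, ← hr, div_mul_cancel₀ _ (pow_ne_zero 2 hr0), mul_pow, Complex.I_sq]
  ring

theorem np_principal_symbol_spectrum_general
    (lam mu : ℝ)
    (ξ : Fin 2 → ℝ) (hξ : ξ ≠ 0) :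
    (npPrincipalSymbol lam mu ξ).IsHermitian ∧
    (npPrincipalSymbol lam mu ξ) ^ 3 =
      (((mu / (2 * (lam + 2 * mu)) : ℝ) : ℂ)) ^ 2 • npPrincipalSymbol lam mu ξ ∧
    spectrum ℂ (npPrincipalSymbol lam mu ξ) =
      {0, ((mu / (2 * (lam + 2 * mu)) : ℝ) : ℂ), -((mu / (2 * (lam + 2 * mu)) : ℝ) : ℂ)} := by
  set k : ℝ := mu / (2 * (lam + 2 * mu))
  set c : ℂ := Complex.I * k / (√(ξ 0 ^ 2 + ξ 1 ^ 2) : ℝ)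
  have hsymb : npPrincipalSymbol lam mu ξ = c • npBlock (ξ 0 : ℂ) (ξ 1) := rfl
  have hc : c ^ 2 * ((ξ 0 : ℂ) ^ 2 + (ξ 1 : ℂ) ^ 2) = -(k : ℂ) ^ 2 :=
    I_mul_div_sqrt_sq_mul (sq_add_sq_ne_zero_of_ne_zero hξ)
  rw [hsymb]
  refine ⟨isHermitian_smul_npBlock_ofReal (by simp [c, neg_div]) _ _, ?_, ?_⟩
  · rw [smul_npBlock_pow_three, hc, neg_neg]
  · refine spectrum_eq_of_eval_charpoly fun x => ?_
    rw [eval_charpoly_smul_npBlock]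
    linear_combination x * hc

/-- For every `ξ ≠ 0`, the principal symbol `k₀(ξ)` of the elastic NP operator is
Hermitian, satisfies `k₀(ξ)³ = 𝕜²·k₀(ξ)` with `𝕜 = μ/(2(λ+2μ))`, and its set of
eigenvalues is exactly `{0, 𝕜, −𝕜}`. -/
theorem np_principal_symbol_spectrum
    (lam mu : ℝ) (hmu : 0 < mu) (hlam2mu : 0 < lam + 2 * mu)
    (ξ : Fin 2 → ℝ) (hξ : ξ ≠ 0) :
    (npPrincipalSymbol lam mu ξ).IsHermitian ∧
    (npPrincipalSymbol lam mu ξ) ^ 3 =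
      (((mu / (2 * (lam + 2 * mu)) : ℝ) : ℂ)) ^ 2 • npPrincipalSymbol lam mu ξ ∧
    spectrum ℂ (npPrincipalSymbol lam mu ξ) =
      {0, ((mu / (2 * (lam + 2 * mu)) : ℝ) : ℂ), -((mu / (2 * (lam + 2 * mu)) : ℝ) : ℂ)} :=
  np_principal_symbol_spectrum_general lam mu ξ hξ
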